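/- Let b = 0 or 1, let G be a graph, and assume G is connected if b = 1. Then A^b_G, ordered by reverse inclusion, is a graded poset with rank function S ↦ g(G − S). -/

import Mathlib

/-!
Common framework: finite vertex-weighted multigraphs (loops and multiple edges
allowed), generalized orientations, divisors, contractions, and poset gadgets.

A graph is encoded by a finite set `V ⊆ ℕ` of vertices, a finite set `E ⊆ ℕ`
of edges, an "ends" function assigning to each edge its ordered pair of
end-vertices (the two components encode the two half-edges), and a weight
function `w : ℕ → ℕ`.

A generalized orientation is a function `ℕ → Option EdgeDir`, where `none`
means the edge is absent (an orientation on a spanning subgraph `G − S` takes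
the value `none` exactly on edges outside `E \ S`), `fwd`/`bwd` give the edge a
single direction, and `bi` makes the edge bioriented.
-/

open scoped Classical
open Finset

/-- Direction of an edge under a generalized orientation. -/
inductive EdgeDir : Type
  | fwd
  | bwd
  | bi
deriving DecidableEq

/-- Generalized orientation data. -/
abbrev Orient : Type := ℕ → Option EdgeDir

/-- The number of ending (target) half-edges at the vertex `v` of an edge with
end-pair `p`, given its direction `d`.  A one-way oriented edge has exactly
one target end; a bioriented edge has both ends as targets. -/
def dirT : Option EdgeDir → ℕ × ℕ → ℕ → ℕ
  | none, _, _ => 0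
  | some EdgeDir.fwd, p, v => if p.2 = v then 1 else 0
  | some EdgeDir.bwd, p, v => if p.1 = v then 1 else 0
  | some EdgeDir.bi, p, v => (if p.1 = v then 1 else 0) + (if p.2 = v then 1 else 0)

/-- Restriction of orientation data to the set `D` of kept edges. -/
def restr (O : Orient) (D : Finset ℕ) : Orient := fun e => if e ∈ D then O e else none

/-- A finite vertex-weighted multigraph. -/
structure WGraph : Type where
  V : Finset ℕ
  E : Finset ℕ
  ends : ℕ → ℕ × ℕ
  w : ℕ → ℕ
  ends_mem : ∀ e ∈ E, (ends e).1 ∈ V ∧ (ends e).2 ∈ V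

namespace WGraph

variable (G : WGraph)

/-- Edge set of the induced subgraph `(G−S)[Z]`: edges of `G − S` with both
ends in `Z`. -/
def indEdges (S Z : Finset ℕ) : Finset ℕ :=
  (G.E \ S).filter fun e => (G.ends e).1 ∈ Z ∧ (G.ends e).2 ∈ Z

/-- The cut `E(Z, Zᶜ)` in `G − S`: edges of `G − S` with exactly one end in `Z`. -/
def cutEdges (S Z : Finset ℕ) : Finset ℕ :=
  (G.E \ S).filter fun e =>
    ((G.ends e).1 ∈ Z ∧ (G.ends e).2 ∉ Z) ∨ ((G.ends e).1 ∉ Z ∧ (G.ends e).2 ∈ Z)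

/-- Adjacency via an edge belonging to `F ∩ E`. -/
def adjOn (F : Finset ℕ) (u v : ℕ) : Prop :=
  ∃ e ∈ F ∩ G.E, G.ends e = (u, v) ∨ G.ends e = (v, u)

/-- Number of connected components of the subgraph with vertex set `W` and
edge set `F`. -/
noncomputable def ncomp (W F : Finset ℕ) : ℕ :=
  Nat.card (Quot (fun u v : {x : ℕ // x ∈ W} => G.adjOn F u.1 v.1))

/-- The subgraph with vertex set `W` and edge set `F` is connected. -/
def ConnSub (W F : Finset ℕ) : Prop := G.ncomp W F = 1

/-- `G` is connected. -/
def Connected : Prop := G.ConnSub G.V G.E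

/-- Genus of the subgraph with vertex set `W` and edge set `F`:
`∑_{v ∈ W} w(v) − |W| + |F| + c`. -/
noncomputable def subGenus (W F : Finset ℕ) : ℤ :=
  (∑ v ∈ W, (G.w v : ℤ)) - (W.card : ℤ) + (((F ∩ G.E).card : ℤ)) + (G.ncomp W F : ℤ)

/-- The genus of `G`. -/
noncomputable def genus : ℤ := G.subGenus G.V G.E

/-- The degree of a vertex: the number of half-edges having `v` as end. -/
def deg (v : ℕ) : ℕ :=
  ∑ e ∈ G.E, ((if (G.ends e).1 = v then 1 else 0) + (if (G.ends e).2 = v then 1 else 0))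

/-- `e` is a bridge of `G − S`: removing it increases the number of connected
components. -/
def IsBridge (S : Finset ℕ) (e : ℕ) : Prop :=
  e ∈ G.E \ S ∧ G.ncomp G.V (G.E \ S) < G.ncomp G.V (G.E \ insert e S)

/-- The set of bridges of `G − S`. -/
noncomputable def bridges (S : Finset ℕ) : Finset ℕ := (G.E \ S).filter (G.IsBridge S)

/-- `T` is a cut of `G`, i.e. `T = E(Z, Zᶜ)` for some `∅ ⊊ Z ⊊ V`. -/
def IsCut (T : Finset ℕ) : Prop :=
  ∃ Z, Z ⊆ G.V ∧ Z.Nonempty ∧ Z ≠ G.V ∧ T = G.cutEdges ∅ Z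

/-- `W` is (the vertex set of) a connected component of `G − S`. -/
def IsCompOf (S W : Finset ℕ) : Prop :=
  W ⊆ G.V ∧ W.Nonempty ∧ G.ConnSub W (G.indEdges S W) ∧ G.cutEdges S W = ∅

/-- The poset `A^b_G`: for `b = 0` the sets `S ⊆ E` with `G − S` bridgeless,
for `b = 1` the sets `S ⊆ E` with `G − S` connected. -/
def Ab (b : ℕ) (S : Finset ℕ) : Prop :=
  S ⊆ G.E ∧ ((b = 0 ∧ ∀ e, ¬ G.IsBridge S e) ∨ (b = 1 ∧ G.ConnSub G.V (G.E \ S)))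

/-- `G` is a stable graph of genus `g`: connected, of genus `g`, and every
vertex of weight `0` has degree at least `3`. -/
noncomputable def Stable (g : ℕ) : Prop :=
  G.Connected ∧ G.genus = (g : ℤ) ∧ ∀ v ∈ G.V, G.w v = 0 → 3 ≤ G.deg v

/-! ### Generalized orientations on spanning subgraphs -/

/-- `O` is orientation data for the spanning subgraph `G − S` (it is defined
exactly on the edges of `G − S`). -/
def IsOrientOn (S : Finset ℕ) (O : Orient) : Prop :=
  ∀ e, O e ≠ none ↔ e ∈ G.E \ S

/-- The set of bioriented edges of `O`. -/
def biE (O : Orient) : Finset ℕ := G.E.filter fun e => O e = some EdgeDir.bi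

/-- `t^O_v`: the number of half-edges having `v` as target. -/
def tOr (O : Orient) (v : ℕ) : ℕ := ∑ e ∈ G.E, dirT (O e) (G.ends e) v

/-- `t^O(Z)`: the number of edges of `G − S` not contained in `(G−S)[Z]`
having a target in `Z`. -/
def tCut (S : Finset ℕ) (O : Orient) (Z : Finset ℕ) : ℕ :=
  ∑ e ∈ (G.E \ S) \ G.indEdges S Z, ∑ v ∈ Z, dirT (O e) (G.ends e) v

/-- The divisor `d^O` of a `b`-orientation `O` on `G − S`:
`d^O_v = w(v) − 1 + t^O_v` if `G − S` has edges, and `d^O_v = w(v) − 1 + b`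
otherwise; it is supported on `V`. -/
noncomputable def divOr (S : Finset ℕ) (b : ℕ) (O : Orient) : ℕ → ℤ :=
  fun v => if v ∈ G.V then
      (if G.E \ S = ∅ then (G.w v : ℤ) - 1 + (b : ℤ) else (G.w v : ℤ) - 1 + (G.tOr O v : ℤ))
    else 0

/-- Equivalence of generalized orientations on `G − S`:  both are orientations
on `G − S` and they have the same divisor. -/
noncomputable def equivOr (S : Finset ℕ) (b : ℕ) (O O' : Orient) : Prop :=
  G.IsOrientOn S O ∧ G.IsOrientOn S O' ∧ G.divOr S b O = G.divOr S b O'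

/-- `O` is a totally cyclic orientation on `G − S`: every nonempty cut
`E(Z,Zᶜ)` contains an edge with target in `Z` and an edge with target in `Zᶜ`. -/
def TotCyc (S : Finset ℕ) (O : Orient) : Prop :=
  ∀ Z : Finset ℕ, Z ⊆ G.V → Z.Nonempty → Z ≠ G.V → (G.cutEdges S Z).Nonempty →
    (∃ e ∈ G.cutEdges S Z, ∃ v ∈ Z, 0 < dirT (O e) (G.ends e) v) ∧
    (∃ e ∈ G.cutEdges S Z, ∃ v ∈ G.V \ Z, 0 < dirT (O e) (G.ends e) v)

/-- `O` is `e₀`-rooted on `G − S`: for every `Z ⊊ V` with `e₀` an edge of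
`(G−S)[Z]`, the cut `E(Z,Zᶜ)` contains an edge with target in `Zᶜ`. -/
def RootedAt (S : Finset ℕ) (O : Orient) (e₀ : ℕ) : Prop :=
  ∀ Z : Finset ℕ, Z ⊆ G.V → Z ≠ G.V → e₀ ∈ G.indEdges S Z →
    ∃ e ∈ G.cutEdges S Z, ∃ v ∈ G.V \ Z, 0 < dirT (O e) (G.ends e) v

/-- `O` is a rooted `1`-orientation on `G − S`:  it has exactly one bioriented
edge, at which it is rooted.  By convention, if `G − S` consists of a single
vertex (and no edges), the empty orientation is rooted. -/
def Rooted1 (S : Finset ℕ) (O : Orient) : Prop :=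
  (∃ e₀, G.biE O = {e₀} ∧ G.RootedAt S O e₀) ∨ (G.E \ S = ∅ ∧ G.V.card = 1)

/-- `O ∈ 𝒪^b(G−S)`:  for `b = 0`, a totally cyclic orientation on `G − S`;
for `b = 1`, a rooted `1`-orientation on `G − S`. -/
def MemOb (S : Finset ℕ) (b : ℕ) (O : Orient) : Prop :=
  G.IsOrientOn S O ∧
    ((b = 0 ∧ G.biE O = ∅ ∧ G.TotCyc S O) ∨ (b = 1 ∧ G.Rooted1 S O))

/-- `O` is a `b`-orientation on `G − S` (exactly `b` bioriented edges; by
convention the empty orientation on a one-vertex edgeless graph counts as a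
`1`-orientation). -/
def IsbOr (S : Finset ℕ) (b : ℕ) (O : Orient) : Prop :=
  G.IsOrientOn S O ∧
    ((G.biE O).card = b ∨ (G.E \ S = ∅ ∧ G.V.card = 1 ∧ b = 1))

/-! ### Posets of orientations on spanning subgraphs -/

/-- The order of `𝒪𝒫^b_G` on pairs `(S, O_S)`:  `(S,O_S) ≤ (T,O_T)` iff
`T ⊆ S` and the restriction of `O_T` to `G − S` is `O_S`. -/
def leOP (p q : Finset ℕ × Orient) : Prop :=
  q.1 ⊆ p.1 ∧ restr q.2 (G.E \ p.1) = p.2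

/-- The order of `𝒪̄𝒫^b_G` on pairs (representing classes): `(S,O̅_S) ≤ (T,O̅_T)`
iff `T ⊆ S` and some representative of `O̅_T` restricts on `G − S` to some
representative of `O̅_S`. -/
noncomputable def leOPbar (b : ℕ) (p q : Finset ℕ × Orient) : Prop :=
  q.1 ⊆ p.1 ∧ ∃ O', G.equivOr q.1 b O' q.2 ∧
    G.equivOr p.1 b (restr O' (G.E \ p.1)) p.2

/-- Equality in `𝒪̄𝒫^b_G`: same subgraph and equivalent orientations. -/
noncomputable def eqOP (b : ℕ) (p q : Finset ℕ × Orient) : Prop :=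
  p.1 = q.1 ∧ G.equivOr p.1 b p.2 q.2

/-- Membership in `𝒪𝒫^b_G`. -/
def POb (b : ℕ) (p : Finset ℕ × Orient) : Prop :=
  G.Ab b p.1 ∧ G.MemOb p.1 b p.2

/-! ### Stable divisors -/

/-- Stable divisors on `G − S` of degree `g(G−S) − c(G−S) + b` (`b = 0, 1`):
for `b = 1`, `G − S` is connected, the degree is `g(G−S)` and
`|d_Z| > g(Z) − 1` for every `Z ⊆ V`; for `b = 0`, the restriction of `d` to
every connected component `W` of `G − S` has degree `g(W) − 1` and satisfies
`|d_Z| > g(Z) − 1` for every `∅ ≠ Z ⊊ W`. -/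
noncomputable def StableDiv (S : Finset ℕ) (b : ℕ) (d : ℕ → ℤ) : Prop :=
  (∀ v, v ∉ G.V → d v = 0) ∧
  ((b = 1 ∧ G.ConnSub G.V (G.E \ S) ∧
      (∑ v ∈ G.V, d v) = G.subGenus G.V (G.E \ S) ∧
      ∀ Z ⊆ G.V, G.subGenus Z (G.indEdges S Z) - 1 < ∑ v ∈ Z, d v) ∨
   (b = 0 ∧ ∀ W, G.IsCompOf S W →
      (∑ v ∈ W, d v) = G.subGenus W (G.indEdges S W) - 1 ∧
      ∀ Z ⊆ W, Z.Nonempty → Z ≠ W →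
        G.subGenus Z (G.indEdges S Z) - 1 < ∑ v ∈ Z, d v))

/-! ### Contractions -/

/-- The relation identifying the two ends of each edge in `S₀`. -/
def conRel (S₀ : Finset ℕ) (u v : ℕ) : Prop :=
  ∃ e ∈ S₀ ∩ G.E, G.ends e = (u, v) ∨ G.ends e = (v, u)

/-- Representative (the least element) of the class of `v` under the
equivalence generated by identifying the ends of the edges in `S₀`. -/
noncomputable def crep (S₀ : Finset ℕ) (v : ℕ) : ℕ :=
  sInf {u | Relation.EqvGen (G.conRel S₀) u v}

/-- The (weighted) edge contraction `G/S₀`: every connected component of the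
subgraph spanned by `S₀` is contracted to a single vertex, whose weight is the
genus of that component; `E(G/S₀) = E(G) \ S₀`. -/
noncomputable def contract (S₀ : Finset ℕ) : WGraph where
  V := G.V.image (G.crep S₀)
  E := G.E \ S₀
  ends := fun e => (G.crep S₀ (G.ends e).1, G.crep S₀ (G.ends e).2)
  w := fun v =>
    (G.subGenus (G.V.filter fun u => G.crep S₀ u = v)
      (G.indEdges (G.E \ S₀) (G.V.filter fun u => G.crep S₀ u = v))).toNat
  ends_mem := by
    intro e he
    rw [Finset.mem_sdiff] at he
    exact ⟨Finset.mem_image_of_mem _ (G.ends_mem e he.1).1,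
           Finset.mem_image_of_mem _ (G.ends_mem e he.1).2⟩

/-- Deletion of the edges in `T` (a spanning subgraph, as a graph). -/
def ddel (T : Finset ℕ) : WGraph where
  V := G.V
  E := G.E \ T
  ends := G.ends
  w := G.w
  ends_mem := fun e he => G.ends_mem e (Finset.mem_sdiff.mp he).1

/-- Pullback `γ* T` of an edge set along the contraction `γ : G → G/S₀`:
`T ∪ (G−T)_br` for `b = 0`, and `T` for `b = 1`. -/
noncomputable def pullStar (b : ℕ) (T : Finset ℕ) : Finset ℕ :=
  if b = 0 then T ∪ G.bridges T else T

/-- Pushforward of a divisor along the contraction `γ : G → G/S₀`: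
`(γ_* d)_v = ∑_{z ∈ γ⁻¹(v)} d_z`. -/
noncomputable def pushDiv (S₀ : Finset ℕ) (d : ℕ → ℤ) : ℕ → ℤ :=
  fun v => ∑ z ∈ G.V.filter (fun u => G.crep S₀ u = v), d z

/-- The divisor `c^{γ,S}` on `G/S₀`: `c^{γ,S}_v = #{e ∈ S₀ ∩ S : γ(e) = v}`. -/
noncomputable def cGamma (S₀ S : Finset ℕ) : ℕ → ℤ :=
  fun v => ((((S₀ ∩ S) ∩ G.E).filter (fun e => G.crep S₀ (G.ends e).1 = v)).card : ℤ)

/-- The relation "`q` is a value of `γ̄_*` at `p`" for the contraction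
`γ : G → G/S₀` acting on classes of orientations: `q` is the restriction to
`(G/S₀) − γ_* S` of a representative of the class of `p` having no bioriented
edge in `S₀` (when `(G/S₀) − γ_*S` has no edges, any representative serves). -/
noncomputable def pushRel (S₀ : Finset ℕ) (b : ℕ) (p q : Finset ℕ × Orient) : Prop :=
  ∃ O', G.equivOr p.1 b O' p.2 ∧
    ((∀ e ∈ S₀, O' e ≠ some EdgeDir.bi) ∨ G.E \ (S₀ ∪ p.1) = ∅) ∧
    q.1 = p.1 \ S₀ ∧ q.2 = restr O' (G.E \ (S₀ ∪ p.1))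

/-! ### Isomorphisms and directed reachability -/

/-- `(fV, fE)` is an isomorphism from `G` to `H`. -/
def IsoMaps (H : WGraph) (fV fE : ℕ → ℕ) : Prop :=
  Set.BijOn fV ↑G.V ↑H.V ∧ Set.BijOn fE ↑G.E ↑H.E ∧
  (∀ e ∈ G.E, H.ends (fE e) = (fV (G.ends e).1, fV (G.ends e).2) ∨
              H.ends (fE e) = (fV (G.ends e).2, fV (G.ends e).1)) ∧
  (∀ v ∈ G.V, H.w (fV v) = G.w v)

/-- `G` and `H` are isomorphic graphs. -/
def Iso (H : WGraph) : Prop := ∃ fV fE, G.IsoMaps H fV fE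

/-- The edge-contraction relation: `G ≤ H` iff `H = G/S₀` (up to isomorphism)
for some `S₀ ⊆ E(G)`. -/
noncomputable def contractLE (H : WGraph) : Prop :=
  ∃ S₀ ⊆ G.E, (G.contract S₀).Iso H

/-- One step from `u` to `v` along an `O`-directed edge (a bioriented edge may
be traversed in both directions). -/
def dirStep (O : Orient) (u v : ℕ) : Prop :=
  ∃ e ∈ G.E,
    (O e = some EdgeDir.fwd ∧ G.ends e = (u, v)) ∨
    (O e = some EdgeDir.bwd ∧ G.ends e = (v, u)) ∨
    (O e = some EdgeDir.bi ∧ (G.ends e = (u, v) ∨ G.ends e = (v, u)))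

/-- There is an `O`-directed path from the (bioriented) edge `e` to the
vertex `v`: a directed path starting at one of the ends of `e` and ending
at `v`. -/
def dirReachFromEdge (O : Orient) (e v : ℕ) : Prop :=
  ∃ u, ((G.ends e).1 = u ∨ (G.ends e).2 = u) ∧
    Relation.ReflTransGen (G.dirStep O) u v

end WGraph

/-! ### Generic poset gadgets (for sets with an order, modulo an equivalence) -/

/-- `le` is a partial order on `{a | P a}` modulo the identification `eqv`. -/
def IsPartialOrderOnMod {α : Type*} (P : α → Prop) (eqv le : α → α → Prop) : Prop :=
  (∀ a, P a → le a a) ∧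
  (∀ a b c, P a → P b → P c → le a b → le b c → le a c) ∧
  (∀ a b, P a → P b → le a b → le b a → eqv a b)

/-- `le` is a partial order on `{a | P a}`. -/
def IsPartialOrderOn {α : Type*} (P : α → Prop) (le : α → α → Prop) : Prop :=
  IsPartialOrderOnMod P (· = ·) le

/-- `a'` covers `a` in `{a | P a}` ordered by `le`, modulo `eqv`. -/
def CoversOnMod {α : Type*} (P : α → Prop) (eqv le : α → α → Prop) (a a' : α) : Prop :=
  P a ∧ P a' ∧ le a a' ∧ ¬ eqv a a' ∧
    ∀ c, P c → le a c → le c a' → (eqv c a ∨ eqv c a')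

/-- `ρ` is a rank on `{a | P a}` ordered by `le`, modulo `eqv`:  along every
covering relation it increases by exactly `1`. -/
def IsRankOnMod {α : Type*} (P : α → Prop) (eqv le : α → α → Prop) (ρ : α → ℕ) : Prop :=
  ∀ a a', CoversOnMod P eqv le a a' → ρ a' = ρ a + 1

/-- `a'` covers `a` in `{a | P a}` ordered by `le`. -/
def CoversOn {α : Type*} (P : α → Prop) (le : α → α → Prop) : α → α → Prop :=
  CoversOnMod P (· = ·) le

/-- `ρ` is a rank on `{a | P a}` ordered by `le`. -/
def IsRankOn {α : Type*} (P : α → Prop) (le : α → α → Prop) (ρ : α → ℕ) : Prop :=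
  IsRankOnMod P (· = ·) le ρ

/-- `f` is a quotient of posets from `({a | P a}, lea)` onto `({b | Q b}, leb)`:
an order-preserving surjection such that any relation downstairs lifts to a
relation upstairs. -/
def IsPosetQuotient {α β : Type*} (P : α → Prop) (Q : β → Prop)
    (lea : α → α → Prop) (leb : β → β → Prop) (f : α → β) : Prop :=
  (∀ a, P a → Q (f a)) ∧
  (∀ a a', P a → P a' → lea a a' → leb (f a) (f a')) ∧
  (∀ b, Q b → ∃ a, P a ∧ f a = b) ∧
  (∀ b b', Q b → Q b' → leb b b' →
    ∃ a a', P a ∧ P a' ∧ f a = b ∧ f a' = b' ∧ lea a a')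

/-! ### Structures over the moduli of stable graphs -/

/-- Pairs `(G, S)` with `G` stable of genus `g` and `S ∈ A^b_G`. -/
noncomputable def PairStab (g b : ℕ) (p : WGraph × Finset ℕ) : Prop :=
  p.1.Stable g ∧ p.1.Ab b p.2

/-- Isomorphism of pairs `(G, S)`. -/
def PairIso (p q : WGraph × Finset ℕ) : Prop :=
  ∃ fV fE, p.1.IsoMaps q.1 fV fE ∧ p.2.image fE = q.2

/-- The order on `A^b_g`: `(G,S) ≤ (H,T)` iff there is a contraction
`γ : G → H` (a contraction of `G` followed by an isomorphism onto `H`) with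
`γ* T ⊆ S`. -/
noncomputable def AgLE (b : ℕ) (p q : WGraph × Finset ℕ) : Prop :=
  ∃ S₀ ⊆ p.1.E, ∃ fV fE, (p.1.contract S₀).IsoMaps q.1 fV fE ∧
    p.1.pullStar b (((p.1.contract S₀).E).filter fun e => fE e ∈ q.2) ⊆ p.2

/-- Triples `(G, S, O̅_S)` with `G` stable of genus `g`, `S ∈ A^b_G` and
`O_S ∈ 𝒪^b(G−S)` (representing elements of `𝒪̄𝒫^b_g`). -/
noncomputable def TripP (g b : ℕ) (x : WGraph × Finset ℕ × Orient) : Prop :=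
  x.1.Stable g ∧ x.1.Ab b x.2.1 ∧ x.1.MemOb x.2.1 b x.2.2

/-- Identification of triples: an isomorphism of the underlying graphs
carrying the subgraph and the class of the orientation (i.e. its divisor) of
one to the other. -/
noncomputable def TripEq (b : ℕ) (x y : WGraph × Finset ℕ × Orient) : Prop :=
  ∃ fV fE, x.1.IsoMaps y.1 fV fE ∧ x.2.1.image fE = y.2.1 ∧
    ∀ v ∈ x.1.V, y.1.divOr y.2.1 b y.2.2 (fV v) = x.1.divOr x.2.1 b x.2.2 v

/-- The order on `𝒪̄𝒫^b_g`: `(G, O̅_S) ≤ (H, O̅_T)` iff there is a contraction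
`γ : G → H` with `γ* T ⊆ S` and `γ̄_* O̅_S ≤ O̅_T`, the latter meaning that the
restriction of `O̅_T` to `H − γ_* S` equals `γ̄_* O̅_S` (compared through the
isomorphism, via the divisors). -/
noncomputable def OPgLE (b : ℕ) (x y : WGraph × Finset ℕ × Orient) : Prop :=
  ∃ S₀ ⊆ x.1.E, ∃ fV fE, (x.1.contract S₀).IsoMaps y.1 fV fE ∧
    x.1.pullStar b (((x.1.contract S₀).E).filter fun e => fE e ∈ y.2.1) ⊆ x.2.1 ∧
    ∃ O', x.1.equivOr x.2.1 b O' x.2.2 ∧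
      ((∀ e ∈ S₀, O' e ≠ some EdgeDir.bi) ∨ x.1.E \ (S₀ ∪ x.2.1) = ∅) ∧
      ∀ v ∈ (x.1.contract S₀).V,
        y.1.divOr ((x.2.1 \ S₀).image fE) b
            (restr y.2.2 (y.1.E \ (x.2.1 \ S₀).image fE)) (fV v)
          = (x.1.contract S₀).divOr (x.2.1 \ S₀) b
              (restr O' (x.1.E \ (S₀ ∪ x.2.1))) v


/-!
The rank `g(G − S)` is `∑ w` plus the cycle rank `|F| − |V| + c(F)` of the edge set `F` of
`G − S`, and adding an edge to `F` raises the cycle rank by one if its ends are already joined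
and leaves it unchanged otherwise. Given `S' ⊊ S` in `A^b_G`, pick `e ∈ S \ S'`. For `b = 1`,
adding `e` to the connected graph `G − S` keeps it connected and raises the rank by one. For
`b = 0`, the ends of `e` are joined in the bridgeless graph `G − S' − e`; add to `G − S` a
minimal set `D` of edges of `G − S'` joining them, and then `e`. Each edge of `D` merges two
components and `e` closes a cycle, so the rank goes up by exactly one, and minimality puts every
new edge on a cycle, so no bridge appears. In both cases this gives `T ∈ A^b_G` with
`S' ⊆ T ⊊ S` and rank one more than `S`, hence `T = S'` when `S'` covers `S`.
-/
namespace Relation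

variable {α : Type*}

def addPair (r : α → α → Prop) (p q : α) (a b : α) : Prop := r a b ∨ (a = p ∧ b = q)

variable {r s : α → α → Prop} {p q : α}

theorem eqvGen_addPair_iff {a b : α} :
    EqvGen (addPair r p q) a b ↔
      EqvGen r a b ∨ (EqvGen r a p ∧ EqvGen r q b) ∨ (EqvGen r a q ∧ EqvGen r p b) := by
  constructor
  · intro h
    induction h with
    | rel x y hxy =>
      rcases hxy with hxy | ⟨rfl, rfl⟩
      · exact .inl (.rel _ _ hxy)
      · exact .inr (.inl ⟨.refl _, .refl _⟩)
    | refl x => exact .inl (.refl x)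
    | symm x y _ ih =>
      rcases ih with h | ⟨h₁, h₂⟩ | ⟨h₁, h₂⟩
      · exact .inl h.symm
      · exact .inr (.inr ⟨h₂.symm, h₁.symm⟩)
      · exact .inr (.inl ⟨h₂.symm, h₁.symm⟩)
    | trans x y z _ _ ih₁ ih₂ =>
      rcases ih₁ with h | ⟨h₁, h₂⟩ | ⟨h₁, h₂⟩ <;> rcases ih₂ with g | ⟨g₁, g₂⟩ | ⟨g₁, g₂⟩
      all_goals first
        | exact .inl (h.trans _ _ _ g)
        | exact .inl (h₁.trans _ _ _ g₂)
        | exact .inr (.inl ⟨h.trans _ _ _ g₁, g₂⟩)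
        | exact .inr (.inr ⟨h.trans _ _ _ g₁, g₂⟩)
        | exact .inr (.inl ⟨h₁, h₂.trans _ _ _ g⟩)
        | exact .inr (.inr ⟨h₁, h₂.trans _ _ _ g⟩)
        | exact .inr (.inl ⟨h₁, g₂⟩)
        | exact .inr (.inr ⟨h₁, g₂⟩)
  · have hr : ∀ {a b}, EqvGen r a b → EqvGen (addPair r p q) a b :=
      EqvGen.mono (fun _ _ => Or.inl) _ _
    have hpq : EqvGen (addPair r p q) p q := .rel _ _ (.inr ⟨rfl, rfl⟩)
    rintro (h | ⟨h₁, h₂⟩ | ⟨h₁, h₂⟩)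
    · exact hr h
    · exact (hr h₁).trans _ _ _ (hpq.trans _ _ _ (hr h₂))
    · exact (hr h₁).trans _ _ _ (hpq.symm.trans _ _ _ (hr h₂))

theorem eqvGen_addPair_iff_of_eqvGen (hpq : EqvGen r p q) {a b : α} :
    EqvGen (addPair r p q) a b ↔ EqvGen r a b := by
  refine eqvGen_addPair_iff.trans ⟨?_, .inl⟩
  rintro (h | ⟨h₁, h₂⟩ | ⟨h₁, h₂⟩)
  · exact h
  · exact h₁.trans _ _ _ (hpq.trans _ _ _ h₂)
  · exact h₁.trans _ _ _ (hpq.symm.trans _ _ _ h₂)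

theorem card_quot_eq_of_eqvGen_eq (h : EqvGen r = EqvGen s) :
    Nat.card (Quot r) = Nat.card (Quot s) := by
  have hrs : ∀ a b, EqvGen r a b → EqvGen s a b := fun a b => h ▸ id
  have hsr : ∀ a b, EqvGen s a b → EqvGen r a b := fun a b => h ▸ id
  refine Nat.card_congr
    ⟨Quot.lift (Quot.mk s) fun a b hab => Quot.eqvGen_sound (hrs a b (.rel a b hab)),
     Quot.lift (Quot.mk r) fun a b hab => Quot.eqvGen_sound (hsr a b (.rel a b hab)), ?_, ?_⟩
  · rintro ⟨a⟩; rfl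
  · rintro ⟨a⟩; rfl

theorem card_quot_addPair_of_eqvGen (hpq : EqvGen r p q) :
    Nat.card (Quot (addPair r p q)) = Nat.card (Quot r) :=
  card_quot_eq_of_eqvGen_eq (funext₂ fun _ _ => propext (eqvGen_addPair_iff_of_eqvGen hpq))

theorem card_quot_of_forall_not (h : ∀ a b, ¬ r a b) : Nat.card (Quot r) = Nat.card α := by
  have hinj : Function.Injective (Quot.mk r) := fun a b hab =>
    Equivalence.eqvGen_iff eq_equivalence |>.1
      (EqvGen.mono (fun a b hab => (h a b hab).elim) _ _ (Quot.eqvGen_exact hab))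
  exact (Nat.card_congr (Equiv.ofBijective _ ⟨hinj, Quot.mk_surjective⟩)).symm

theorem card_quot_addPair_of_not_eqvGen [Finite α] (hpq : ¬ EqvGen r p q) :
    Nat.card (Quot r) = Nat.card (Quot (addPair r p q)) + 1 := by
  classical
  have := Fintype.ofFinite (Quot r)
  set φ : Quot r → Quot (addPair r p q) := Quot.map id fun _ _ => Or.inl
  have hφ : Function.Bijective fun A : {A | A ≠ Quot.mk r q} => φ A := by
    constructor
    · rintro ⟨⟨a⟩, ha⟩ ⟨⟨b⟩, hb⟩ hab
      rcases eqvGen_addPair_iff.1 (Quot.eqvGen_exact hab) with h | ⟨-, h⟩ | ⟨h, -⟩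
      · exact Subtype.ext (Quot.eqvGen_sound h)
      · exact (hb (Quot.eqvGen_sound h.symm)).elim
      · exact (ha (Quot.eqvGen_sound h)).elim
    · rintro ⟨c⟩
      by_cases hc : Quot.mk r c = Quot.mk r q
      · refine ⟨⟨Quot.mk r p, fun h => hpq (Quot.eqvGen_exact h)⟩, Quot.eqvGen_sound ?_⟩
        exact eqvGen_addPair_iff.2 (.inr (.inl ⟨.refl p, (Quot.eqvGen_exact hc).symm⟩))
      · exact ⟨⟨_, hc⟩, rfl⟩
  rw [← Nat.card_congr (Equiv.ofBijective _ hφ), Nat.card_eq_fintype_card,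
    Nat.card_eq_fintype_card, Set.card_ne_eq]
  have : 0 < Fintype.card (Quot r) := Fintype.card_pos_iff.2 ⟨Quot.mk r p⟩
  omega

end Relation

namespace WGraph

open Relation

variable {G : WGraph} {F F' S : Finset ℕ} {e : ℕ} {p q : {x : ℕ // x ∈ G.V}}

variable (G) in
def adjV (F : Finset ℕ) (u v : {x : ℕ // x ∈ G.V}) : Prop := G.adjOn F u v

variable (G) in
def Joined (F : Finset ℕ) : {x : ℕ // x ∈ G.V} → {x : ℕ // x ∈ G.V} → Prop :=
  EqvGen (G.adjV F)

theorem ncomp_eq_card_quot : G.ncomp G.V F = Nat.card (Quot (G.adjV F)) := rfl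

theorem exists_ends (he : e ∈ G.E) :
    ∃ p q : {x : ℕ // x ∈ G.V}, G.ends e = (↑p, ↑q) :=
  ⟨⟨_, (G.ends_mem e he).1⟩, ⟨_, (G.ends_mem e he).2⟩, rfl⟩

theorem Joined.mono (h : F ⊆ F') {u v : {x : ℕ // x ∈ G.V}} (huv : G.Joined F u v) :
    G.Joined F' u v :=
  EqvGen.mono (fun _ _ ⟨f, hf, hends⟩ => ⟨f, inter_subset_inter_right h hf, hends⟩) _ _ huv

theorem eqvGen_adjV_insert (he : e ∈ G.E) (hpq : G.ends e = (↑p, ↑q)) :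
    EqvGen (G.adjV (insert e F)) = EqvGen (addPair (G.adjV F) p q) := by
  refine le_antisymm (fun a b h => ?_) (fun a b h => ?_)
  · refine EqvGen.rec (fun x y hxy => ?_) .refl (fun _ _ _ => .symm _ _)
      (fun _ _ _ _ _ => .trans _ _ _) h
    obtain ⟨f, hf, hends⟩ := hxy
    rcases mem_insert.1 (mem_inter.1 hf).1 with rfl | hfF
    · rw [hpq] at hends
      rcases hends with h | h <;> obtain ⟨hx, hy⟩ := Prod.mk.inj h
      · exact .rel _ _ (.inr ⟨Subtype.ext hx.symm, Subtype.ext hy.symm⟩)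
      · exact .symm _ _ (.rel _ _ (.inr ⟨Subtype.ext hx.symm, Subtype.ext hy.symm⟩))
    · exact .rel _ _ (.inl ⟨f, mem_inter.2 ⟨hfF, (mem_inter.1 hf).2⟩, hends⟩)
  · refine EqvGen.mono (fun x y hxy => ?_) _ _ h
    rcases hxy with ⟨f, hf, hends⟩ | ⟨rfl, rfl⟩
    · exact ⟨f, inter_subset_inter_right (subset_insert e F) hf, hends⟩
    · exact ⟨e, mem_inter.2 ⟨mem_insert_self e F, he⟩, .inl hpq⟩

theorem joined_insert_iff (he : e ∈ G.E) (hpq : G.ends e = (↑p, ↑q))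
    {a b : {x : ℕ // x ∈ G.V}} :
    G.Joined (insert e F) a b ↔ G.Joined F a b ∨ (G.Joined F a p ∧ G.Joined F q b) ∨
      (G.Joined F a q ∧ G.Joined F p b) := by
  rw [Joined, eqvGen_adjV_insert he hpq, eqvGen_addPair_iff]; rfl

theorem joined_insert_iff_of_joined (he : e ∈ G.E) (hpq : G.ends e = (↑p, ↑q))
    (hj : G.Joined F p q) {a b : {x : ℕ // x ∈ G.V}} :
    G.Joined (insert e F) a b ↔ G.Joined F a b := by
  rw [Joined, eqvGen_adjV_insert he hpq, eqvGen_addPair_iff_of_eqvGen hj]; rfl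

theorem ncomp_insert_of_joined (he : e ∈ G.E) (hpq : G.ends e = (↑p, ↑q))
    (hj : G.Joined F p q) : G.ncomp G.V (insert e F) = G.ncomp G.V F := by
  rw [ncomp_eq_card_quot, card_quot_eq_of_eqvGen_eq (eqvGen_adjV_insert he hpq),
    card_quot_addPair_of_eqvGen hj, ncomp_eq_card_quot]

theorem ncomp_insert_of_not_joined (he : e ∈ G.E) (hpq : G.ends e = (↑p, ↑q))
    (hj : ¬ G.Joined F p q) : G.ncomp G.V F = G.ncomp G.V (insert e F) + 1 := by
  rw [ncomp_eq_card_quot, ncomp_eq_card_quot,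
    card_quot_eq_of_eqvGen_eq (eqvGen_adjV_insert he hpq)]
  exact card_quot_addPair_of_not_eqvGen hj

theorem joined_of_connSub (h : G.ConnSub G.V F) (a b : {x : ℕ // x ∈ G.V}) :
    G.Joined F a b :=
  Quot.eqvGen_exact (@Subsingleton.elim _ (Nat.card_eq_one_iff_unique.1 h).1 _ _)

theorem card_le_ncomp_add_card (hF : F ⊆ G.E) : G.V.card ≤ G.ncomp G.V F + F.card := by
  induction F using Finset.induction_on with
  | empty =>
    rw [ncomp_eq_card_quot, card_quot_of_forall_not fun a b ⟨f, hf, _⟩ => by simp at hf]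
    simp
  | insert f F hf ih =>
    have hfE : f ∈ G.E := hF (mem_insert_self f F)
    obtain ⟨p, q, hpq⟩ := exists_ends hfE
    have := ih ((subset_insert f F).trans hF)
    rw [card_insert_of_notMem hf]
    by_cases hj : G.Joined F p q
    · rw [ncomp_insert_of_joined hfE hpq hj]; omega
    · have := ncomp_insert_of_not_joined hfE hpq hj; omega

theorem subGenus_sdiff (S : Finset ℕ) :
    G.subGenus G.V (G.E \ S) =
      ∑ v ∈ G.V, (G.w v : ℤ) - G.V.card + (G.E \ S).card + G.ncomp G.V (G.E \ S) := by
  rw [subGenus, inter_eq_left.2 sdiff_subset]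

theorem subGenus_sdiff_nonneg (S : Finset ℕ) : 0 ≤ G.subGenus G.V (G.E \ S) := by
  have h := card_le_ncomp_add_card (G := G) (F := G.E \ S) sdiff_subset
  have hw : (0 : ℤ) ≤ ∑ v ∈ G.V, (G.w v : ℤ) := sum_nonneg fun v _ => Int.natCast_nonneg _
  rw [subGenus_sdiff]
  omega

theorem isBridge_iff (hpq : G.ends e = (↑p, ↑q)) :
    G.IsBridge S e ↔ e ∈ G.E \ S ∧ ¬ G.Joined ((G.E \ S).erase e) p q := by
  refine and_congr_right fun he => ?_
  have heE : e ∈ G.E := (mem_sdiff.1 he).1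
  conv_lhs => rw [sdiff_insert, ← insert_erase he]
  rw [erase_insert (notMem_erase e _)]
  by_cases hj : G.Joined ((G.E \ S).erase e) p q
  · simp [hj, ncomp_insert_of_joined heE hpq hj]
  · simp [hj, ncomp_insert_of_not_joined heE hpq hj]

variable (G) in
def Bridgeless (F : Finset ℕ) : Prop :=
  ∀ e ∈ F, ∀ p q : {x : ℕ // x ∈ G.V}, G.ends e = (↑p, ↑q) → G.Joined (F.erase e) p q

theorem ab_zero_iff : G.Ab 0 S ↔ S ⊆ G.E ∧ G.Bridgeless (G.E \ S) := by
  refine and_congr_right fun _ => ⟨fun h e he p q hpq => ?_, fun h => .inl ⟨rfl, ?_⟩⟩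
  · rcases h with ⟨-, h⟩ | ⟨h, -⟩
    · by_contra hj
      exact h e ((isBridge_iff hpq).2 ⟨he, hj⟩)
    · exact absurd h zero_ne_one
  · intro e hbr
    obtain ⟨p, q, hpq⟩ := exists_ends (mem_sdiff.1 hbr.1).1
    obtain ⟨he, hj⟩ := (isBridge_iff hpq).1 hbr
    exact hj (h e he p q hpq)

theorem ab_one_iff : G.Ab 1 S ↔ S ⊆ G.E ∧ G.ConnSub G.V (G.E \ S) := by
  simp [Ab]

theorem ncomp_union_add_card {D : Finset ℕ} (hD : D ⊆ G.E)
    (h : ∀ f ∈ D, ∀ p q : {x : ℕ // x ∈ G.V}, G.ends f = (↑p, ↑q) →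
      ¬ G.Joined (F ∪ D.erase f) p q) :
    G.ncomp G.V (F ∪ D) + D.card = G.ncomp G.V F := by
  induction D using Finset.induction_on with
  | empty => simp
  | insert f D hf ih =>
    have hfE : f ∈ G.E := hD (mem_insert_self f D)
    obtain ⟨p, q, hpq⟩ := exists_ends hfE
    have hj := h f (mem_insert_self f D) p q hpq
    rw [erase_insert hf] at hj
    have ih := ih ((subset_insert f D).trans hD) fun g hg p' q' hpq' hj' =>
      h g (mem_insert_of_mem hg) p' q' hpq'
        (hj'.mono (union_subset_union_right (erase_subset_erase g (subset_insert f D))))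
    rw [union_insert, card_insert_of_notMem hf]
    have := ncomp_insert_of_not_joined hfE hpq hj
    omega

theorem exists_minimal_joining {X : Finset ℕ} (h : G.Joined (F ∪ X) p q) :
    ∃ D ⊆ X, G.Joined (F ∪ D) p q ∧ ∀ f ∈ D, ¬ G.Joined (F ∪ D.erase f) p q := by
  obtain ⟨D, ⟨hDX, hD⟩, hmin⟩ := WellFoundedLT.exists_minimal inferInstance
    {D : Finset ℕ | D ⊆ X ∧ G.Joined (F ∪ D) p q} ⟨X, subset_rfl, h⟩
  refine ⟨D, hDX, hD, fun f hf hj => ?_⟩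
  have := hmin ⟨(erase_subset f D).trans hDX, hj⟩ (erase_subset f D) hf
  exact notMem_erase f D this

theorem not_joined_ends_of_minimal {D : Finset ℕ} (hD : D ⊆ G.E) (hj : G.Joined (F ∪ D) p q)
    (hmin : ∀ f ∈ D, ¬ G.Joined (F ∪ D.erase f) p q) :
    ∀ f ∈ D, ∀ p' q' : {x : ℕ // x ∈ G.V}, G.ends f = (↑p', ↑q') →
      ¬ G.Joined (F ∪ D.erase f) p' q' := by
  intro f hf p' q' hpq' hj'
  refine hmin f hf ((joined_insert_iff_of_joined (hD hf) hpq' hj').1 ?_)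
  rwa [← union_insert, insert_erase hf]

theorem Bridgeless.union_insert {D : Finset ℕ} (hF : G.Bridgeless F) (hD : D ⊆ G.E)
    (he : e ∈ G.E) (hpq : G.ends e = (↑p, ↑q)) (heD : e ∉ D) (hj : G.Joined (F ∪ D) p q)
    (hmin : ∀ f ∈ D, ¬ G.Joined (F ∪ D.erase f) p q) :
    G.Bridgeless (F ∪ insert e D) := by
  intro f hf p' q' hpq'
  by_cases hfF : f ∈ F
  · exact (hF f hfF p' q' hpq').mono (erase_subset_erase f subset_union_left)
  obtain rfl | hfD := mem_insert.1 ((mem_union.1 hf).resolve_left hfF)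
  · obtain ⟨rfl, rfl⟩ : p' = p ∧ q' = q := by
      rw [hpq] at hpq'
      exact ⟨Subtype.ext (Prod.mk.inj hpq').1.symm, Subtype.ext (Prod.mk.inj hpq').2.symm⟩
    refine hj.mono fun x hx => mem_erase.2 ⟨?_, union_subset_union_right (subset_insert f D) hx⟩
    rintro rfl
    exact (mem_union.1 hx).elim hfF heD
  -- Removing `f` separates `p` from `q` in `F ∪ D`, so the ends of `f` are joined to `p` and
  -- `q`, which `e` links.
  set H := F ∪ D.erase f
  have hjH : G.Joined (insert f H) p q := by rwa [← Finset.union_insert, insert_erase hfD]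
  have hpqH : G.Joined (insert e H) p q := .rel _ _ ⟨e, mem_inter.2 ⟨mem_insert_self e H, he⟩, .inl hpq⟩
  have hK : insert e H ⊆ (F ∪ insert e D).erase f := by
    intro x hx
    refine mem_erase.2 ⟨?_, ?_⟩
    · rintro rfl
      rcases mem_insert.1 hx with rfl | hx
      · exact heD hfD
      · exact (mem_union.1 hx).elim hfF (notMem_erase x D)
    · rcases mem_insert.1 hx with rfl | hx
      · exact mem_union_right F (mem_insert_self x D)
      · exact union_subset_union_right ((erase_subset f D).trans (subset_insert e D)) hx
  have hH : H ⊆ insert e H := subset_insert e H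
  refine Joined.mono hK ?_
  rcases (joined_insert_iff (hD hfD) hpq').1 hjH with h | ⟨h₁, h₂⟩ | ⟨h₁, h₂⟩
  · exact absurd h (hmin f hfD)
  · exact ((h₁.mono hH).symm.trans _ _ _ hpqH).trans _ _ _ (h₂.mono hH).symm
  · exact ((h₂.mono hH).trans _ _ _ hpqH.symm).trans _ _ _ (h₁.mono hH)

theorem Bridgeless.exists_extension_of_mem {X : Finset ℕ} (hF : G.Bridgeless F)
    (hFX : G.Bridgeless (F ∪ X)) (hX : X ⊆ G.E) (he : e ∈ X) :
    ∃ D ⊆ X, e ∈ D ∧ G.Bridgeless (F ∪ D) ∧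
      G.ncomp G.V (F ∪ D) + D.card = G.ncomp G.V F + 1 := by
  obtain ⟨p, q, hpq⟩ := exists_ends (hX he)
  have hj : G.Joined (F ∪ X.erase e) p q :=
    (hFX e (mem_union_right F he) p q hpq).mono <| by
      rw [erase_union_distrib]; exact union_subset_union_left (erase_subset e F)
  obtain ⟨D, hDX, hjD, hmin⟩ := exists_minimal_joining hj
  have heD : e ∉ D := fun h => notMem_erase e X (hDX h)
  have hDE : D ⊆ G.E := hDX.trans ((erase_subset e X).trans hX)
  refine ⟨insert e D, insert_subset he (hDX.trans (erase_subset e X)), mem_insert_self e D,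
    hF.union_insert hDE (hX he) hpq heD hjD hmin, ?_⟩
  rw [Finset.union_insert, ncomp_insert_of_joined (hX he) hpq hjD, card_insert_of_notMem heD,
    ← ncomp_union_add_card hDE (not_joined_ends_of_minimal hDE hjD hmin), add_assoc]

theorem subGenus_sdiff_sdiff_eq_add_one {D : Finset ℕ} (hDS : D ⊆ S) (hSE : S ⊆ G.E)
    (h : G.ncomp G.V (G.E \ (S \ D)) + D.card = G.ncomp G.V (G.E \ S) + 1) :
    G.subGenus G.V (G.E \ (S \ D)) = G.subGenus G.V (G.E \ S) + 1 := by
  rw [subGenus_sdiff, subGenus_sdiff]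
  rw [sdiff_sdiff_eq_sdiff_union (hDS.trans hSE)] at h ⊢
  rw [card_union_of_disjoint (disjoint_sdiff_self_left.mono_right hDS)]
  push_cast
  omega

theorem exists_ab_sdiff_subGenus_add_one {b : ℕ} {S' : Finset ℕ} (hS : G.Ab b S) (hS' : G.Ab b S')
    (hS'S : S' ⊆ S) (he : e ∈ S \ S') :
    ∃ D ⊆ S \ S', e ∈ D ∧ G.Ab b (S \ D) ∧
      G.subGenus G.V (G.E \ (S \ D)) = G.subGenus G.V (G.E \ S) + 1 := by
  have hSE : S ⊆ G.E := hS.1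
  rcases hS.2 with ⟨rfl, -⟩ | ⟨rfl, hconn⟩
  · rw [ab_zero_iff] at hS hS'
    rw [← sdiff_union_sdiff_cancel hSE hS'S] at hS'
    obtain ⟨D, hDX, heD, hbr, hcount⟩ :=
      hS.2.exists_extension_of_mem hS'.2 (sdiff_subset.trans hSE) he
    have hDS : D ⊆ S := hDX.trans sdiff_subset
    rw [← sdiff_sdiff_eq_sdiff_union (hDS.trans hSE)] at hbr hcount
    exact ⟨D, hDX, heD, ab_zero_iff.2 ⟨sdiff_subset.trans hSE, hbr⟩,
      subGenus_sdiff_sdiff_eq_add_one hDS hSE hcount⟩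
  · have heE : e ∈ G.E := hSE (mem_sdiff.1 he).1
    obtain ⟨p, q, hpq⟩ := exists_ends heE
    have hE : G.E \ (S \ {e}) = insert e (G.E \ S) := by
      rw [sdiff_sdiff_eq_sdiff_union (singleton_subset_iff.2 heE), union_comm, ← insert_eq]
    have hn := ncomp_insert_of_joined heE hpq (joined_of_connSub hconn p q)
    have hDS : {e} ⊆ S := singleton_subset_iff.2 (mem_sdiff.1 he).1
    refine ⟨{e}, singleton_subset_iff.2 he, mem_singleton_self e,
      ab_one_iff.2 ⟨sdiff_subset.trans hSE, ?_⟩, subGenus_sdiff_sdiff_eq_add_one hDS hSE ?_⟩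
    · rw [ConnSub, hE, hn]; exact hconn
    · rw [hE, hn, card_singleton]

end WGraph

theorem Ab_graded_poset_general (G : WGraph) (b : ℕ) :
    IsPartialOrderOn (G.Ab b) (fun S S' => S' ⊆ S) ∧
    IsRankOn (G.Ab b) (fun S S' => S' ⊆ S)
      (fun S => (G.subGenus G.V (G.E \ S)).toNat) := by
  refine ⟨⟨fun _ _ => subset_rfl, fun _ _ _ _ _ _ h₁ h₂ => h₂.trans h₁,
    fun _ _ _ _ h₁ h₂ => h₂.antisymm h₁⟩, ?_⟩
  rintro S S' ⟨hS, hS', hS'S, hne, hcov⟩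
  obtain ⟨e, heS, heS'⟩ := not_subset.1 fun h => hne (h.antisymm hS'S)
  obtain ⟨D, hD, heD, hT, hgenus⟩ := G.exists_ab_sdiff_subGenus_add_one hS hS' hS'S (mem_sdiff.2 ⟨heS, heS'⟩)
  have hT' : S \ D = S' := by
    refine (hcov _ hT sdiff_subset
      (subset_sdiff.2 ⟨hS'S, disjoint_sdiff.mono_right hD⟩)).resolve_left fun h => ?_
    have heSD : e ∈ S \ D := by rwa [h]
    exact (mem_sdiff.1 heSD).2 heD
  have := G.subGenus_sdiff_nonneg S
  show (G.subGenus G.V (G.E \ S')).toNat = (G.subGenus G.V (G.E \ S)).toNat + 1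
  rw [← hT', hgenus]
  omega

/-- For `b = 0, 1` (with `G` connected if `b = 1`), the set
`A^b_G`, ordered by reverse inclusion, is a graded poset with rank
`S ↦ g(G − S)`. -/
theorem Ab_graded_poset (G : WGraph) (b : ℕ) (hb : b = 0 ∨ b = 1)
    (hconn : b = 1 → G.Connected) :
    IsPartialOrderOn (G.Ab b) (fun S S' => S' ⊆ S) ∧
    IsRankOn (G.Ab b) (fun S S' => S' ⊆ S)
      (fun S => (G.subGenus G.V (G.E \ S)).toNat) :=
  Ab_graded_poset_general G b
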